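/- arXiv:2307.03252 — 6 statements merged into one kernel-verified Lean document; each statement's English description precedes it below -/
import Mathlib

section
/- A linear thrackle on n points has at most n edges: if P is a set of n points in general position in the plane and E is a set of segments with endpoints in P such that every two segments in E meet exactly once (either at a common endpoint or at a proper crossing), then |E| ≤ n. -/
/-!
Call `v` the extreme neighbour of `u` if every other neighbour of `u` lies strictly clockwise
of `v` as seen from `u`; a vertex has at most one. Every edge `uv` is extreme at one of its
endpoints: otherwise some edge `ua` leaves `u` to the left of the line `uv` and some edge `vb`
leaves `v` to its right (strictly, by general position), so the segments `ua` and `vb` are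
disjoint, although any two edges meet. Sending each edge to an endpoint at which it is extreme
is therefore injective.
-/

open Finset

abbrev Pt : Type := ℝ × ℝ

/-- 2D cross product (determinant) of two vectors. -/
def cross2 (u v : Pt) : ℝ := u.1 * v.2 - u.2 * v.1

/-- The points of `P` are in general position: no three of them are collinear. -/
def GenPos (P : Finset Pt) : Prop :=
  ∀ a ∈ P, ∀ b ∈ P, ∀ c ∈ P, a ≠ b → a ≠ c → b ≠ c → ¬ Collinear ℝ ({a, b, c} : Set Pt)

/-- The points of `P` are in convex position. -/
def ConvexPos (P : Finset Pt) : Prop :=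
  ∀ x ∈ P, x ∉ convexHull ℝ (↑(P.erase x) : Set Pt)

/-- The convex hull of a finite point set. -/
def hull (S : Finset Pt) : Set Pt := convexHull ℝ (↑S : Set Pt)

/-- `C(𝒮)` is a convex hull thrackle on `P`: the sets are subsets of `P`, hulls are
pairwise distinct, no hull is contained in another, any two hulls intersect, and the
intersection of any three distinct hulls is contained in `P`. -/
def CHT (P : Finset Pt) (𝒮 : Finset (Finset Pt)) : Prop :=
  GenPos P ∧
  (∀ S ∈ 𝒮, S ⊆ P) ∧
  (∀ S ∈ 𝒮, ∀ T ∈ 𝒮, hull S = hull T → S = T) ∧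
  (∀ S ∈ 𝒮, ∀ T ∈ 𝒮, S ≠ T → ¬ hull S ⊆ hull T) ∧
  (∀ S ∈ 𝒮, ∀ T ∈ 𝒮, S ≠ T → (hull S ∩ hull T).Nonempty) ∧
  (∀ S ∈ 𝒮, ∀ T ∈ 𝒮, ∀ U ∈ 𝒮, S ≠ T → S ≠ U → T ≠ U →
    hull S ∩ hull T ∩ hull U ⊆ (↑P : Set Pt))

lemma cross2_swap (u v : Pt) : cross2 v u = -cross2 u v := by
  simp only [cross2]; ring

lemma collinear_of_cross2_eq_zero {a b c : Pt} (hab : a ≠ b)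
    (h : cross2 (b - a) (c - a) = 0) : Collinear ℝ ({a, b, c} : Set Pt) := by
  have hc : c ∈ line[ℝ, a, b] := by
    rw [← sub_add_cancel c a, ← vadd_eq_add, vadd_left_mem_affineSpan_pair, vsub_eq_sub]
    have hba : b - a ≠ 0 := sub_ne_zero.2 hab.symm
    generalize b - a = u at h hba ⊢
    generalize c - a = w at h ⊢
    obtain ⟨x, y⟩ := u
    obtain ⟨p, q⟩ := w
    have hd : x ^ 2 + y ^ 2 ≠ 0 := by
      contrapose! hba
      ext <;> dsimp <;> nlinarith
    simp only [cross2] at h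
    -- `w` is parallel to `u`, hence equal to its projection onto `u`
    refine ⟨(p * x + q * y) / (x ^ 2 + y ^ 2), ?_⟩
    ext <;> dsimp <;> field_simp
    · linear_combination y * h
    · linear_combination -x * h
  have := collinear_insert_of_mem_affineSpan_pair hc
  rwa [Set.insert_comm c a, Set.pair_comm c b] at this

lemma GenPos.cross2_ne_zero {P : Finset Pt} (hgen : GenPos P) {a b c : Pt}
    (ha : a ∈ P) (hb : b ∈ P) (hc : c ∈ P) (hab : a ≠ b) (hac : a ≠ c) (hbc : b ≠ c) :
    cross2 (b - a) (c - a) ≠ 0 :=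
  fun h => hgen a ha b hb c hc hab hac hbc (collinear_of_cross2_eq_zero hab h)

lemma hull_pair (a b : Pt) : hull {a, b} = segment ℝ a b := by
  rw [hull, coe_pair, convexHull_pair]

lemma eq_or_cross2_pos_of_mem_segment {u a d z : Pt} (ha : 0 < cross2 d (a - u))
    (hz : z ∈ segment ℝ u a) : z = u ∨ 0 < cross2 d (z - u) := by
  obtain ⟨s, t, -, ht, hst, rfl⟩ := hz
  obtain rfl : s = 1 - t := by linarith
  rcases ht.eq_or_lt with rfl | ht
  · simp
  · right
    have : cross2 d ((1 - t) • u + t • a - u) = t * cross2 d (a - u) := by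
      simp only [cross2, Prod.fst_sub, Prod.snd_sub, Prod.fst_add, Prod.snd_add,
        Prod.smul_fst, Prod.smul_snd, smul_eq_mul]
      ring
    rw [this]
    positivity

lemma disjoint_segment_of_cross2_pos {u v a b : Pt} (huv : u ≠ v)
    (ha : 0 < cross2 (v - u) (a - u)) (hb : 0 < cross2 (u - v) (b - v)) :
    Disjoint (segment ℝ u a) (segment ℝ v b) := by
  refine Set.disjoint_left.2 fun z hza hzb => ?_
  rcases eq_or_cross2_pos_of_mem_segment ha hza with rfl | hu <;>
    rcases eq_or_cross2_pos_of_mem_segment hb hzb with rfl | hv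
  · exact huv rfl
  all_goals
    simp only [cross2, Prod.fst_sub, Prod.snd_sub] at *
    nlinarith

def IsExtremeNeighbor (E : Finset (Finset Pt)) (u v : Pt) : Prop :=
  ∀ w, {u, w} ∈ E → w ≠ v → 0 < cross2 (w - u) (v - u)

lemma IsExtremeNeighbor.eq {E : Finset (Finset Pt)} {u v v' : Pt}
    (h : IsExtremeNeighbor E u v) (h' : IsExtremeNeighbor E u v')
    (hv : {u, v} ∈ E) (hv' : {u, v'} ∈ E) : v = v' := by
  by_contra hne
  have := h v' hv' (Ne.symm hne)
  linarith [h' v hv hne, cross2_swap (v - u) (v' - u)]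

lemma isExtremeNeighbor_or_of_pairwise_meet {P : Finset Pt} {E : Finset (Finset Pt)}
    (hgen : GenPos P) (hE : ∀ e ∈ E, e ⊆ P ∧ e.card = 2)
    (hmeet : ∀ e ∈ E, ∀ f ∈ E, e ≠ f → (hull e ∩ hull f).Nonempty)
    {u v : Pt} (huv : {u, v} ∈ E) :
    IsExtremeNeighbor E u v ∨ IsExtremeNeighbor E v u := by
  by_contra! ⟨hu, hv⟩
  simp only [IsExtremeNeighbor, not_forall, not_lt] at hu hv
  obtain ⟨a, hua, hav, ha⟩ := hu
  obtain ⟨b, hvb, hbu, hb⟩ := hv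
  have hpair : ∀ {x y : Pt}, {x, y} ∈ E → x ∈ P ∧ y ∈ P ∧ x ≠ y := fun hxy =>
    ⟨(hE _ hxy).1 (by simp), (hE _ hxy).1 (by simp),
      fun h => by simpa [h] using (hE _ hxy).2⟩
  obtain ⟨huP, hvP, huv'⟩ := hpair huv
  obtain ⟨-, haP, hua'⟩ := hpair hua
  obtain ⟨-, hbP, hvb'⟩ := hpair hvb
  have ha' : 0 < cross2 (v - u) (a - u) :=
    lt_of_le_of_ne (by linarith [cross2_swap (v - u) (a - u)])
      (hgen.cross2_ne_zero huP hvP haP huv' hua' (Ne.symm hav)).symm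
  have hb' : 0 < cross2 (u - v) (b - v) :=
    lt_of_le_of_ne (by linarith [cross2_swap (u - v) (b - v)])
      (hgen.cross2_ne_zero hvP huP hbP (Ne.symm huv') hvb' (Ne.symm hbu)).symm
  have hne : ({u, a} : Finset Pt) ≠ {v, b} := fun h => by
    have : u ∈ ({v, b} : Finset Pt) := h ▸ mem_insert_self u {a}
    simp only [mem_insert, mem_singleton] at this
    exact this.elim huv' hbu.symm
  obtain ⟨z, hza, hzb⟩ := hmeet _ hua _ hvb hne
  rw [hull_pair] at hza hzb
  exact Set.disjoint_left.1 (disjoint_segment_of_cross2_pos huv' ha' hb') hza hzb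

lemma card_le_of_forall_isExtremeNeighbor {P : Finset Pt} {E : Finset (Finset Pt)}
    (hE : ∀ e ∈ E, e ⊆ P)
    (hext : ∀ e ∈ E, ∃ u v, e = {u, v} ∧ IsExtremeNeighbor E u v) :
    E.card ≤ P.card := by
  classical
  choose! u v he hext using hext
  refine card_le_card_of_injOn u (fun e he' => hE e he' ((he e he').ge (mem_insert_self _ _)))
    fun e he' f hf' huf => ?_
  rw [mem_coe] at he' hf'
  have hef := hext e he'
  rw [huf] at hef
  have hv : v e = v f := hef.eq (hext f hf') (by rw [← huf, ← he e he']; exact he')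
    (by rw [← he f hf']; exact hf')
  rw [he e he', he f hf', huf, hv]

/-- A linear thrackle on `n` points has at most `n` edges: if every two of the segments
(with endpoints in a point set `P` in general position) meet in exactly one point --
either a common endpoint or a proper crossing -- then there are at most `|P|` segments. -/
theorem linear_thrackle_card_le (P : Finset Pt) (E : Finset (Finset Pt))
    (hgen : GenPos P)
    (hE : ∀ e ∈ E, e ⊆ P ∧ e.card = 2)
    (hmeet : ∀ e ∈ E, ∀ f ∈ E, e ≠ f → ∃ z, hull e ∩ hull f = {z}) :
    E.card ≤ P.card := by
  have hmeet' : ∀ e ∈ E, ∀ f ∈ E, e ≠ f → (hull e ∩ hull f).Nonempty := fun e he f hf hef => by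
    obtain ⟨z, hz⟩ := hmeet e he f hf hef
    exact hz ▸ Set.singleton_nonempty z
  refine card_le_of_forall_isExtremeNeighbor (fun e he => (hE e he).1) fun e he => ?_
  obtain ⟨u, v, -, rfl⟩ := card_eq_two.1 (hE e he).2
  rcases isExtremeNeighbor_or_of_pairwise_meet hgen hE hmeet' he with h | h
  · exact ⟨u, v, rfl, h⟩
  · exact ⟨v, u, pair_comm u v, h⟩
end

section
/- If two wedges at a point p intersect only in p, then their left sides cannot both be non-lefties from p. Equivalently: given two convex hulls C1 = Conv(S1), C2 = Conv(S2) of a convex hull thrackle both having p as a vertex, with C1 ∩ C2 = {p}, and left wedge-sides pb1 and pb2 respectively, at least one of pb1, pb2 is a leftie from p. -/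
/-!
Suppose neither left side is a leftie. Then some point `x` of the second hull lies strictly to
the right of `pb₁` and some point `y` of the first hull strictly to the right of `pb₂`: a point
on the ray `pb₁` itself would, after scaling towards `p`, be a second common point of the two
hulls. Whichever way `pb₂` turns relative to `pb₁`, one of `b₁, b₂, x, y` then lies in the cone
at `p` spanned by the other hull, and scaling it towards `p` again gives a common point other
than `p`.
-/

open Finset

/-- `b` is to the left of the vector from `p` to `a`: the counterclockwise angle
`a p b` lies in `(0°, 180°]` (the point `p` itself also counts as left). -/
def LeftOf (p a b : Pt) : Prop :=
  0 < cross2 (a - p) (b - p) ∨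
    (cross2 (a - p) (b - p) = 0 ∧ (a - p).1 * (b - p).1 + (a - p).2 * (b - p).2 ≤ 0)

/-- The segment `pa` is a leftie from `p` (w.r.t. the family `𝒮`): some member of the
family has its whole convex hull to the left of the vector from `p` to `a`. -/
def IsLeftie (𝒮 : Finset (Finset Pt)) (p a : Pt) : Prop :=
  ∃ S ∈ 𝒮, ∀ b ∈ hull S, LeftOf p a b

/-- `pb` is the left side of the wedge of the hull of `S` at its vertex `p`:
`b ∈ S`, `b ≠ p` and the whole hull of `S` is (weakly) on the clockwise side of the
vector from `p` to `b`. -/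
def IsLeftWedgeSide (S : Finset Pt) (p b : Pt) : Prop :=
  b ∈ S ∧ b ≠ p ∧ ∀ c ∈ hull S, cross2 (b - p) (c - p) ≤ 0

lemma cross2_smul_left (u v : Pt) (t : ℝ) : cross2 (t • u) v = t * cross2 u v := by
  simp only [cross2, Prod.smul_fst, Prod.smul_snd, smul_eq_mul]; ring

lemma cross2_smul_right (u v : Pt) (t : ℝ) : cross2 u (t • v) = t * cross2 u v := by
  simp only [cross2, Prod.smul_fst, Prod.smul_snd, smul_eq_mul]; ring

lemma isLinearMap_cross2 (u : Pt) : IsLinearMap ℝ (cross2 u) :=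
  ⟨fun v w => by simp only [cross2, Prod.fst_add, Prod.snd_add]; ring,
    fun t v => by simp only [cross2, Prod.smul_fst, Prod.smul_snd, smul_eq_mul]; ring⟩

lemma exists_eq_smul_of_cross2_eq_zero {u v : Pt} (hu : u ≠ 0) (h : cross2 u v = 0) :
    ∃ t : ℝ, v = t • u := by
  have hu' : u.1 ^ 2 + u.2 ^ 2 ≠ 0 := by
    contrapose! hu
    obtain ⟨h1, h2⟩ := (add_eq_zero_iff_of_nonneg (sq_nonneg _) (sq_nonneg _)).1 hu
    exact Prod.ext (pow_eq_zero_iff two_ne_zero |>.1 h1) (pow_eq_zero_iff two_ne_zero |>.1 h2)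
  simp only [cross2] at h
  refine ⟨(u.1 * v.1 + u.2 * v.2) / (u.1 ^ 2 + u.2 ^ 2), Prod.ext ?_ ?_⟩ <;>
    simp only [Prod.smul_fst, Prod.smul_snd, smul_eq_mul] <;> field_simp
  · linear_combination (-u.2) * h
  · linear_combination u.1 * h

lemma eq_smul_add_smul_of_cross2_ne_zero {a c : Pt} (h : cross2 a c ≠ 0) (w : Pt) :
    w = (cross2 w c / cross2 a c) • a + (cross2 a w / cross2 a c) • c := by
  refine Prod.ext ?_ ?_ <;>
  · simp only [Prod.fst_add, Prod.snd_add, Prod.smul_fst, Prod.smul_snd, smul_eq_mul]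
    field_simp
    simp only [cross2]
    ring

lemma collinear_of_cross2_sub_eq_zero {p b z : Pt} (hbp : b ≠ p)
    (h : cross2 (b - p) (z - p) = 0) : Collinear ℝ ({p, b, z} : Set Pt) := by
  obtain ⟨t, ht⟩ := exists_eq_smul_of_cross2_eq_zero (sub_ne_zero.2 hbp) h
  rw [collinear_iff_of_mem (Set.mem_insert p _)]
  refine ⟨b - p, ?_⟩
  rintro q (rfl | rfl | rfl)
  · exact ⟨0, by simp⟩
  · exact ⟨1, by simp⟩
  · exact ⟨t, by rw [← ht]; simp⟩

section ConvexMeet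

variable {E : Type*} [AddCommGroup E] [Module ℝ E] {A B : Set E} {p : E}

lemma Convex.eq_of_sub_eq_smul_sub (hA : Convex ℝ A) (hB : Convex ℝ B) (hAB : A ∩ B = {p})
    {a d : E} (ha : a ∈ A) (hd : d ∈ B) {s : ℝ} (hs : 0 ≤ s) (h : d - p = s • (a - p)) :
    d = p := by
  have hp : p ∈ A ∩ B := hAB ▸ rfl
  rcases le_total s 1 with hs1 | hs1
  · have hdA : d ∈ A := by
      simpa [← h] using hA.add_smul_sub_mem hp.1 ha ⟨hs, hs1⟩
    exact hAB.subset ⟨hdA, hd⟩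
  · have haB : a ∈ B := by
      have := hB.add_smul_sub_mem hp.2 hd ⟨inv_nonneg.2 hs, inv_le_one_of_one_le₀ hs1⟩
      rwa [h, smul_smul, inv_mul_cancel₀ (by positivity), one_smul, add_sub_cancel] at this
    have hap : a = p := hAB.subset ⟨ha, haB⟩
    rwa [hap, sub_self, smul_zero, sub_eq_zero] at h

lemma Convex.eq_of_sub_eq_smul_add_smul (hA : Convex ℝ A) (hB : Convex ℝ B)
    (hAB : A ∩ B = {p}) {a c d : E} (ha : a ∈ A) (hc : c ∈ A) (hd : d ∈ B) {α β : ℝ}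
    (hα : 0 ≤ α) (hβ : 0 ≤ β) (h : d - p = α • (a - p) + β • (c - p)) : d = p := by
  rcases (add_nonneg hα hβ).eq_or_lt with hs | hs
  · rw [(add_eq_zero_iff_of_nonneg hα hβ).1 hs.symm |>.1,
      (add_eq_zero_iff_of_nonneg hα hβ).1 hs.symm |>.2] at h
    simpa [sub_eq_zero] using h
  · have hq : (α / (α + β)) • a + (β / (α + β)) • c ∈ A :=
      hA ha hc (div_nonneg hα hs.le) (div_nonneg hβ hs.le) (by field_simp)
    refine hA.eq_of_sub_eq_smul_sub hB hAB hq hd hs.le ?_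
    rw [h]
    simp only [smul_sub, smul_add, smul_smul, mul_div_cancel₀ _ hs.ne', add_smul]
    abel

lemma mem_convexHull_sep_of_le {g : E → ℝ} (hg : IsLinearMap ℝ g) {s : Set E} {r : ℝ}
    (hs : ∀ z ∈ s, g z ≤ r) {x : E} (hx : x ∈ convexHull ℝ s) (hgx : g x = r) :
    x ∈ convexHull ℝ {z ∈ s | g z = r} := by
  set F := convexHull ℝ {z ∈ s | g z = r}
  have hF : F ⊆ {z | g z = r} := convexHull_min (fun z hz => hz.2) (convex_hyperplane hg r)
  have hle : ∀ z ∈ {z | g z < r} ∪ F, g z ≤ r := by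
    rintro z (hz | hz)
    exacts [le_of_lt hz, (hF hz).le]
  have hconv : Convex ℝ ({z | g z < r} ∪ F) := by
    refine convex_iff_openSegment_subset.2 fun z₁ h₁ z₂ h₂ => ?_
    by_cases hlt : g z₁ < r ∨ g z₂ < r
    · rintro _ ⟨a, b, ha, hb, hab, rfl⟩
      left
      show g (a • z₁ + b • z₂) < r
      rw [hg.map_add, hg.map_smul, hg.map_smul, smul_eq_mul, smul_eq_mul]
      have hr : r = a * r + b * r := by rw [← add_mul, hab, one_mul]
      rcases hlt with hlt | hlt
      · nlinarith [mul_pos ha (sub_pos.2 hlt), mul_nonneg hb.le (sub_nonneg.2 (hle z₂ h₂))]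
      · nlinarith [mul_pos hb (sub_pos.2 hlt), mul_nonneg ha.le (sub_nonneg.2 (hle z₁ h₁))]
    · rw [not_or, not_lt, not_lt] at hlt
      have hz₁ : z₁ ∈ F := h₁.resolve_left hlt.1.not_gt
      have hz₂ : z₂ ∈ F := h₂.resolve_left hlt.2.not_gt
      exact (openSegment_subset_segment ℝ _ _).trans
        (((convex_convexHull ℝ _).segment_subset hz₁ hz₂).trans Set.subset_union_right)
  have hsub : s ⊆ {z | g z < r} ∪ F := fun z hz =>
    (hs z hz).lt_or_eq.imp id fun h => subset_convexHull ℝ _ ⟨hz, h⟩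
  exact (convexHull_min hsub hconv hx).resolve_left hgx.not_lt

end ConvexMeet

section Plane

variable {A B : Set Pt} {p : Pt}

lemma eq_of_cross2_sector (hA : Convex ℝ A) (hB : Convex ℝ B) (hAB : A ∩ B = {p})
    {a c d : Pt} (ha : a ∈ A) (hc : c ∈ A) (hd : d ∈ B) (hac : cross2 (a - p) (c - p) < 0)
    (had : cross2 (a - p) (d - p) ≤ 0) (hdc : cross2 (d - p) (c - p) ≤ 0) : d = p :=
  hA.eq_of_sub_eq_smul_add_smul hB hAB ha hc hd (div_nonneg_of_nonpos hdc hac.le)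
    (div_nonneg_of_nonpos had hac.le) (eq_smul_add_smul_of_cross2_ne_zero hac.ne _)

lemma cross2_neg_of_not_leftOf (hA : Convex ℝ A) (hB : Convex ℝ B) (hAB : A ∩ B = {p})
    {b x : Pt} (hb : b ∈ A) (hx : x ∈ B) (h : ¬LeftOf p b x) : cross2 (b - p) (x - p) < 0 := by
  simp only [LeftOf, not_or, not_and, not_le, not_lt] at h
  obtain ⟨hle, hdot⟩ := h
  refine hle.lt_of_ne fun h0 => ?_
  have hdot := hdot h0
  have hbp : b - p ≠ 0 := by
    rintro hbp
    simp [hbp] at hdot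
  obtain ⟨t, ht⟩ := exists_eq_smul_of_cross2_eq_zero hbp h0
  have ht0 : 0 < t := by
    rw [ht] at hdot
    simp only [Prod.smul_fst, Prod.smul_snd, smul_eq_mul] at hdot
    nlinarith [sq_nonneg (b - p).1, sq_nonneg (b - p).2]
  have hxp := hA.eq_of_sub_eq_smul_sub hB hAB hb hx ht0.le ht
  simp [hxp] at hdot

lemma cross2_nonneg_of_cross2_neg (hA : Convex ℝ A) (hB : Convex ℝ B) (hAB : A ∩ B = {p})
    {a b y : Pt} (ha : a ∈ A) (hb : b ∈ B) (hy : y ∈ A) (hab : cross2 (a - p) (b - p) < 0)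
    (hay : cross2 (a - p) (y - p) < 0 ∨ ∃ t : ℝ, 0 ≤ t ∧ y - p = t • (a - p)) :
    0 ≤ cross2 (b - p) (y - p) := by
  by_contra! hby
  rcases hay with hay | ⟨t, ht, hyt⟩
  · have hbp := eq_of_cross2_sector hA hB hAB ha hy hb hay hab.le hby.le
    simp [hbp, cross2] at hab
  · rw [hyt, cross2_smul_right, cross2_swap] at hby
    nlinarith

end Plane

lemma IsLeftWedgeSide.mem_hull {S : Finset Pt} {p b : Pt} (hb : IsLeftWedgeSide S p b) :
    b ∈ hull S :=
  subset_convexHull ℝ _ hb.1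

/-- By general position `p` and `b` are the only points of `S` on the supporting line `pb`,
so the hull meets that line in the segment `[p, b]`. -/
lemma IsLeftWedgeSide.cross2_neg_or_mem_ray {P S : Finset Pt} {p b x : Pt} (hgp : GenPos P)
    (hSP : S ⊆ P) (hp : p ∈ P) (hb : IsLeftWedgeSide S p b) (hx : x ∈ hull S) :
    cross2 (b - p) (x - p) < 0 ∨ ∃ t : ℝ, 0 ≤ t ∧ x - p = t • (b - p) := by
  obtain ⟨hbS, hbp, hside⟩ := hb
  have hsub : ∀ z, cross2 (b - p) (z - p) = cross2 (b - p) z - cross2 (b - p) p :=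
    fun z => (isLinearMap_cross2 _).map_sub z p
  refine (hside x hx).lt_or_eq.imp_right fun hx0 => ?_
  have hface : x ∈ convexHull ℝ {z ∈ (S : Set Pt) | cross2 (b - p) z = cross2 (b - p) p} :=
    mem_convexHull_sep_of_le (isLinearMap_cross2 _)
      (fun z hz => by linarith [hsub z, hside z (subset_convexHull ℝ _ hz)]) hx
      (by linarith [hsub x])
  have hpb : {z ∈ (S : Set Pt) | cross2 (b - p) z = cross2 (b - p) p} ⊆ {p, b} := by
    rintro z ⟨hzS, hz⟩
    by_contra hzpb
    simp only [Set.mem_insert_iff, Set.mem_singleton_iff, not_or] at hzpb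
    exact hgp p hp b (hSP hbS) z (hSP hzS) hbp.symm (Ne.symm hzpb.1) (Ne.symm hzpb.2)
      (collinear_of_cross2_sub_eq_zero hbp (by linarith [hsub z]))
  have hseg := convexHull_mono hpb hface
  rw [convexHull_pair, segment_eq_image'] at hseg
  obtain ⟨t, ⟨ht, -⟩, hxt⟩ := hseg
  exact ⟨t, ht, by rw [← hxt, add_sub_cancel_left]⟩

theorem left_sides_not_both_nonlefties_general (P : Finset Pt) (𝒮 : Finset (Finset Pt))
    (hcht : CHT P 𝒮) (S1 S2 : Finset Pt) (hS1 : S1 ∈ 𝒮) (hS2 : S2 ∈ 𝒮)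
    (p b1 b2 : Pt) (hp : p ∈ P)
    (hb1 : IsLeftWedgeSide S1 p b1) (hb2 : IsLeftWedgeSide S2 p b2)
    (hmeet : hull S1 ∩ hull S2 = {p}) :
    IsLeftie 𝒮 p b1 ∨ IsLeftie 𝒮 p b2 := by
  by_contra! h
  obtain ⟨hgp, hsub, -⟩ := hcht
  simp only [IsLeftie, not_exists, not_and, not_forall] at h
  obtain ⟨x, hx, hb1x⟩ := h.1 S2 hS2
  obtain ⟨y, hy, hb2y⟩ := h.2 S1 hS1
  have hconv1 : Convex ℝ (hull S1) := convex_convexHull ℝ _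
  have hconv2 : Convex ℝ (hull S2) := convex_convexHull ℝ _
  have hmeet' : hull S2 ∩ hull S1 = {p} := by rwa [Set.inter_comm]
  have hux := cross2_neg_of_not_leftOf hconv1 hconv2 hmeet hb1.mem_hull hx hb1x
  have hvy := cross2_neg_of_not_leftOf hconv2 hconv1 hmeet' hb2.mem_hull hy hb2y
  rcases lt_trichotomy (cross2 (b1 - p) (b2 - p)) 0 with huv | huv | huv
  · exact hvy.not_ge <| cross2_nonneg_of_cross2_neg hconv1 hconv2 hmeet hb1.mem_hull
      hb2.mem_hull hy huv (hb1.cross2_neg_or_mem_ray hgp (hsub S1 hS1) hp hy)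
  · obtain ⟨s, hs⟩ := exists_eq_smul_of_cross2_eq_zero (sub_ne_zero.2 hb1.2.1) huv
    have hs0 : 0 ≤ s := by
      have := hb2.2.2 x hx
      rw [hs, cross2_smul_left] at this
      nlinarith
    exact hb2.2.1 (hconv1.eq_of_sub_eq_smul_sub hconv2 hmeet hb1.mem_hull hb2.mem_hull hs0 hs)
  · have hvu : cross2 (b2 - p) (b1 - p) < 0 := by rw [cross2_swap]; linarith
    exact hux.not_ge <| cross2_nonneg_of_cross2_neg hconv2 hconv1 hmeet' hb2.mem_hull
      hb1.mem_hull hx hvu (hb2.cross2_neg_or_mem_ray hgp (hsub S2 hS2) hp hx)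

/-- If two wedges at `p` intersect only in `p`, then their left sides cannot both be
non-lefties from `p`: given two hulls of the thrackle having `p` as a vertex with
intersection exactly `{p}`, at least one of their left wedge-sides is a leftie from `p`. -/
theorem left_sides_not_both_nonlefties (P : Finset Pt) (𝒮 : Finset (Finset Pt))
    (hcht : CHT P 𝒮) (S1 S2 : Finset Pt) (hS1 : S1 ∈ 𝒮) (hS2 : S2 ∈ 𝒮) (hne : S1 ≠ S2)
    (p b1 b2 : Pt) (hp : p ∈ P) (hp1 : p ∈ S1) (hp2 : p ∈ S2)
    (hb1 : IsLeftWedgeSide S1 p b1) (hb2 : IsLeftWedgeSide S2 p b2)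
    (hmeet : hull S1 ∩ hull S2 = {p}) :
    IsLeftie 𝒮 p b1 ∨ IsLeftie 𝒮 p b2 :=
  left_sides_not_both_nonlefties_general P 𝒮 hcht S1 S2 hS1 hS2 p b1 b2 hp hb1 hb2 hmeet
end

section
/- In a convex hull thrackle on points in convex position, if at least 3 convex hulls contain a common point p ∈ P, then two of them intersect exactly in {p}. -/
open Finset

/-!
Suppose each of the three pairwise intersections contains a point other than `p`. Since `p` is
an extreme point of `conv P`, the set `L = conv P \ {p}` is convex, and it meets each pairwise
intersection. Together with `p`, which lies in all three hulls, this says that any three of the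
four convex sets `hull S₁, hull S₂, hull S₃, L` intersect, so by Helly's theorem in the plane all
four do. Hence the triple intersection is a convex set containing `p` and another point, so it is
infinite, contradicting that it lies in the finite set `P`.
-/

open Module

section Convex

variable {𝕜 E ι : Type*} [Field 𝕜] [LinearOrder 𝕜] [IsStrictOrderedRing 𝕜]
  [AddCommGroup E] [Module 𝕜 E]

theorem Convex.infinite_of_mem_of_ne {s : Set E} (hs : Convex 𝕜 s) {x y : E} (hx : x ∈ s)
    (hy : y ∈ s) (hxy : x ≠ y) : s.Infinite := by
  have hseg : (segment 𝕜 x y).Infinite := by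
    rw [segment_eq_image_lineMap]
    exact (Set.Icc_infinite zero_lt_one).image (AffineMap.lineMap_injective 𝕜 hxy).injOn
  exact hseg.mono (hs.segment_subset hx hy)

variable [FiniteDimensional 𝕜 E]

variable (𝕜) in
theorem Convex.iInter_nonempty_of_forall_ne [Fintype ι] {F : ι → Set E}
    (hcard : finrank 𝕜 E + 1 < Fintype.card ι) (hconv : ∀ i, Convex 𝕜 (F i))
    (h : ∀ j, (⋂ (i) (_ : i ≠ j), F i).Nonempty) : (⋂ i, F i).Nonempty := by
  simpa using Convex.helly_theorem' (s := univ) (fun i _ => hconv i) fun I _ hI => by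
    obtain ⟨j, -, hj⟩ := exists_mem_notMem_of_card_lt_card (s := I) (t := univ) (by simp; omega)
    refine (h j).mono fun x hx => Set.mem_iInter₂.2 fun i hi => ?_
    exact Set.mem_iInter₂.1 hx i (ne_of_mem_of_not_mem hi hj)

theorem Convex.inter_nonempty_of_finrank_le_two (hE : finrank 𝕜 E ≤ 2) {A B C D : Set E}
    (hA : Convex 𝕜 A) (hB : Convex 𝕜 B) (hC : Convex 𝕜 C) (hD : Convex 𝕜 D)
    (hABC : (A ∩ B ∩ C).Nonempty) (hABD : (A ∩ B ∩ D).Nonempty)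
    (hACD : (A ∩ C ∩ D).Nonempty) (hBCD : (B ∩ C ∩ D).Nonempty) :
    (A ∩ B ∩ C ∩ D).Nonempty := by
  have := Convex.iInter_nonempty_of_forall_ne 𝕜 (F := ![A, B, C, D]) (by simp; omega)
    (fun i => by fin_cases i <;> assumption) fun j => by
      simp only [Set.Nonempty, Set.mem_inter_iff, and_assoc] at *
      fin_cases j <;> simpa [Fin.forall_fin_succ]
  simpa [Fin.forall_fin_succ, Set.nonempty_def, and_assoc] using this

end Convex

theorem mem_extremePoints_convexHull_of_notMem_convexHull_sdiff {E : Type*} [AddCommGroup E]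
    [Module ℝ E] [TopologicalSpace E] [T2Space E] [IsTopologicalAddGroup E] [ContinuousSMul ℝ E]
    [LocallyConvexSpace ℝ E] {s : Set E} (hs : s.Finite) {x : E} (hxs : x ∈ s)
    (hx : x ∉ convexHull ℝ (s \ {x})) : x ∈ (convexHull ℝ s).extremePoints ℝ := by
  by_contra hext
  have hsub : (convexHull ℝ s).extremePoints ℝ ⊆ s \ {x} := fun y hy =>
    ⟨extremePoints_convexHull_subset hy, fun hyx => hext (hyx ▸ hy)⟩
  apply hx
  rw [← (hs.sdiff (t := {x})).isClosed_convexHull ℝ |>.closure_eq]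
  refine closure_mono (convexHull_mono hsub) ?_
  rw [closure_convexHull_extremePoints (hs.isCompact_convexHull ℝ) (convex_convexHull ℝ s)]
  exact subset_convexHull ℝ s hxs

/-- In a convex hull thrackle on points in convex position, if at least three hulls
contain a common point `p ∈ P`, then two of them intersect exactly in `{p}`. -/
theorem three_hulls_through_point (P : Finset Pt) (𝒮 : Finset (Finset Pt))
    (hcht : CHT P 𝒮) (hconv : ConvexPos P) (p : Pt) (hp : p ∈ P)
    (S1 S2 S3 : Finset Pt) (h1 : S1 ∈ 𝒮) (h2 : S2 ∈ 𝒮) (h3 : S3 ∈ 𝒮)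
    (h12 : S1 ≠ S2) (h13 : S1 ≠ S3) (h23 : S2 ≠ S3)
    (hp1 : p ∈ hull S1) (hp2 : p ∈ hull S2) (hp3 : p ∈ hull S3) :
    hull S1 ∩ hull S2 = {p} ∨ hull S1 ∩ hull S3 = {p} ∨ hull S2 ∩ hull S3 = {p} := by
  obtain ⟨-, hsub, -, -, -, htriple⟩ := hcht
  have hL : Convex ℝ (convexHull ℝ (P : Set Pt) \ {p}) := by
    refine ((convex_convexHull ℝ _).mem_extremePoints_iff_convex_sdiff.1 ?_).2
    refine mem_extremePoints_convexHull_of_notMem_convexHull_sdiff P.finite_toSet hp ?_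
    simpa using hconv p hp
  have hpair : ∀ S ∈ 𝒮, ∀ T, p ∈ hull S → p ∈ hull T → hull S ∩ hull T ≠ {p} →
      (hull S ∩ hull T ∩ (convexHull ℝ (P : Set Pt) \ {p})).Nonempty := by
    intro S hS T hpS hpT hne
    obtain ⟨q, hq, hqp⟩ :=
      ((Set.nontrivial_iff_ne_singleton (Set.mem_inter hpS hpT)).2 hne).exists_ne p
    exact ⟨q, hq, convexHull_mono (by exact_mod_cast hsub S hS) hq.1, hqp⟩
  by_contra! hne
  obtain ⟨h12', h13', h23'⟩ := hne
  obtain ⟨r, hr, -, hrp⟩ := Convex.inter_nonempty_of_finrank_le_two (by simp)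
    (convex_convexHull ℝ _) (convex_convexHull ℝ _) (convex_convexHull ℝ _) hL
    ⟨p, ⟨hp1, hp2⟩, hp3⟩ (hpair S1 h1 S2 hp1 hp2 h12') (hpair S1 h1 S3 hp1 hp3 h13')
    (hpair S2 h2 S3 hp2 hp3 h23')
  have hinf : (hull S1 ∩ hull S2 ∩ hull S3).Infinite :=
    (((convex_convexHull ℝ _).inter (convex_convexHull ℝ _)).inter
      (convex_convexHull ℝ _)).infinite_of_mem_of_ne ⟨⟨hp1, hp2⟩, hp3⟩ hr (Ne.symm hrp)
  exact hinf (P.finite_toSet.subset (htriple S1 h1 S2 h2 S3 h3 h12 h13 h23))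
end

section
/- If a family of convex hulls of subsets of n points in general position satisfies pairwise nonempty intersection and that no hull contains another (but triple intersections are unrestricted), then the family can be as large as the number of triples obtained by splitting n points in convex position into three arcs of size n/3 and taking one point from each arc; in particular there exist such families of size (n/3)^3 for n divisible by 3. -/
/-!
Put the `3m` points `(t, t²)`, `t = 0, …, 3m - 1`, on a parabola and split them into three arcs
of `m` consecutive points. Points on a parabola are in general and convex position, so a hull of
such points determines them, and two distinct triangles with one vertex per arc cannot contain
each other. Two such triangles `abc` and `a'b'c'` meet: if `a = a'` they share a vertex, and if
`a < a'` then `a < a' < b < c'`, so the chords `ab` and `a'c'` of the parabola cross.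
-/

open Finset

section TransversalTriples

variable {α : Type*} [DecidableEq α] {A B C : Finset α}

def transversalTriples (A B C : Finset α) : Finset (Finset α) :=
  (A ×ˢ B ×ˢ C).image fun p => {p.1, p.2.1, p.2.2}

lemma mem_transversalTriples {S : Finset α} :
    S ∈ transversalTriples A B C ↔ ∃ a ∈ A, ∃ b ∈ B, ∃ c ∈ C, {a, b, c} = S := by
  simp [transversalTriples, and_assoc]

lemma subset_union_of_mem_transversalTriples {S : Finset α}
    (hS : S ∈ transversalTriples A B C) : S ⊆ A ∪ B ∪ C := by
  obtain ⟨a, ha, b, hb, c, hc, rfl⟩ := mem_transversalTriples.1 hS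
  simp [insert_subset_iff, ha, hb, hc]

variable (hAB : Disjoint A B) (hAC : Disjoint A C) (hBC : Disjoint B C)
include hAB hAC hBC

lemma card_transversalTriples : #(transversalTriples A B C) = #A * #B * #C := by
  rw [transversalTriples, card_image_of_injOn, card_product, card_product, mul_assoc]
  rintro ⟨a, b, c⟩ habc ⟨a', b', c'⟩ habc' h
  simp only [coe_product, Set.mem_prod, mem_coe] at habc habc'
  obtain ⟨ha, hb, hc⟩ := habc
  obtain ⟨ha', hb', hc'⟩ := habc'
  have hmem : a ∈ ({a', b', c'} : Finset α) ∧ b ∈ ({a', b', c'} : Finset α) ∧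
      c ∈ ({a', b', c'} : Finset α) := by
    simp only at h; simp [← h]
  simp only [mem_insert, mem_singleton] at hmem
  obtain ⟨h₁, h₂, h₃⟩ := hmem
  have e₁ : a = a' := h₁.resolve_right <| by
    rintro (rfl | rfl)
    exacts [disjoint_left.1 hAB ha hb', disjoint_left.1 hAC ha hc']
  have e₂ : b = b' := (h₂.resolve_left <| by
    rintro rfl; exact disjoint_left.1 hAB ha' hb).resolve_right <| by
    rintro rfl; exact disjoint_left.1 hBC hb hc'
  have e₃ : c = c' := h₃.resolve_left (by rintro rfl; exact disjoint_left.1 hAC ha' hc)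
    |>.resolve_left (by rintro rfl; exact disjoint_left.1 hBC hb' hc)
  rw [e₁, e₂, e₃]

lemma card_of_mem_transversalTriples {S : Finset α} (hS : S ∈ transversalTriples A B C) :
    #S = 3 := by
  obtain ⟨a, ha, b, hb, c, hc, rfl⟩ := mem_transversalTriples.1 hS
  exact card_eq_three.2 ⟨a, b, c, disjoint_iff_ne.1 hAB a ha b hb,
    disjoint_iff_ne.1 hAC a ha c hc, disjoint_iff_ne.1 hBC b hb c hc, rfl⟩

end TransversalTriples

lemma ConvexPos.subset_of_hull_subset {P S T : Finset Pt} (hP : ConvexPos P) (hS : S ⊆ P)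
    (hT : T ⊆ P) (h : hull S ⊆ hull T) : S ⊆ T := by
  intro x hx
  by_contra hxT
  refine hP x (hS hx) (convexHull_mono ?_ (h (subset_convexHull ℝ _ (mem_coe.2 hx))))
  intro y hy
  exact mem_erase.2 ⟨by rintro rfl; exact hxT hy, hT hy⟩

lemma ConvexPos.eq_of_hull_subset {P S T : Finset Pt} (hP : ConvexPos P) (hS : S ⊆ P)
    (hT : T ⊆ P) (hcard : #T ≤ #S) (h : hull S ⊆ hull T) : S = T :=
  eq_of_subset_of_card_le (hP.subset_of_hull_subset hS hT h) hcard

lemma cross2_eq_zero_of_collinear {a b c : Pt} (h : Collinear ℝ ({a, b, c} : Set Pt)) :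
    cross2 (b - a) (c - a) = 0 := by
  obtain ⟨v, hv⟩ := (collinear_iff_of_mem (Set.mem_insert a _)).1 h
  obtain ⟨r, hr⟩ := hv b (by simp)
  obtain ⟨s, hs⟩ := hv c (by simp)
  rw [hr, hs, vadd_eq_add, vadd_eq_add, add_sub_cancel_right, add_sub_cancel_right]
  simp only [cross2, Prod.smul_fst, Prod.smul_snd, smul_eq_mul]
  ring

noncomputable def parabola (t : ℝ) : Pt := (t, t ^ 2)

lemma parabola_injective : Function.Injective parabola := fun _ _ h => congrArg Prod.fst h

lemma cross2_parabola (s t u : ℝ) :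
    cross2 (parabola t - parabola s) (parabola u - parabola s) = (t - s) * (u - s) * (u - t) := by
  simp only [cross2, parabola, Prod.fst_sub, Prod.snd_sub]
  ring

lemma genPos_image_parabola (X : Finset ℝ) : GenPos (X.image parabola) := by
  simp only [GenPos, mem_image]
  rintro _ ⟨s, -, rfl⟩ _ ⟨t, -, rfl⟩ _ ⟨u, -, rfl⟩ hst hsu htu hcol
  have := cross2_eq_zero_of_collinear hcol
  rw [cross2_parabola] at this
  simp only [mul_eq_zero, sub_eq_zero] at this
  rcases this with (rfl | rfl) | rfl <;> simp_all

/-- The tangent line at `parabola t` leaves all other points of the parabola strictly on one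
side. -/
lemma parabola_notMem_convexHull {X : Set ℝ} {t : ℝ} (ht : t ∉ X) :
    parabola t ∉ convexHull ℝ (parabola '' X) := by
  let ℓ : Pt →ₗ[ℝ] ℝ := LinearMap.snd ℝ ℝ ℝ - (2 * t) • LinearMap.fst ℝ ℝ ℝ
  have hℓ (s : ℝ) : ℓ (parabola s) = (s - t) ^ 2 - t ^ 2 := by
    simp [ℓ, parabola]; ring
  have hsub : parabola '' X ⊆ {p | -t ^ 2 < ℓ p} := by
    rintro _ ⟨s, hs, rfl⟩
    have : s - t ≠ 0 := sub_ne_zero.2 (by rintro rfl; exact ht hs)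
    simp only [Set.mem_ofPred_eq, hℓ]
    linarith [sq_pos_of_ne_zero this]
  intro h
  have := convexHull_min hsub (convex_halfSpace_gt ℓ.isLinear _) h
  simp [hℓ] at this

lemma convexPos_image_parabola (X : Finset ℝ) : ConvexPos (X.image parabola) := by
  simp only [ConvexPos, mem_image]
  rintro _ ⟨t, -, rfl⟩
  rw [← image_erase parabola_injective, coe_image]
  exact parabola_notMem_convexHull (by simp)

lemma mem_segment_parabola {p q x : ℝ} (hpq : p < q) (hpx : p ≤ x) (hxq : x ≤ q) :
    ((x, (p + q) * x - p * q) : Pt) ∈ segment ℝ (parabola p) (parabola q) := by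
  have hqp : q - p ≠ 0 := sub_ne_zero.2 hpq.ne'
  refine ⟨(q - x) / (q - p), (x - p) / (q - p), div_nonneg (by linarith) (by linarith),
    div_nonneg (by linarith) (by linarith), by field_simp; ring, ?_⟩
  simp only [parabola, Prod.smul_mk, smul_eq_mul, Prod.mk_add_mk, Prod.mk.injEq]
  constructor <;> (field_simp; ring)

/-- The crossing point lies at the abscissa where the lines `y = (p + q) x - p q` and
`y = (r + s) x - r s` through the two chords meet. -/
lemma segment_parabola_inter_nonempty {p q r s : ℝ} (hpr : p < r) (hrq : r < q) (hqs : q < s) :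
    (segment ℝ (parabola p) (parabola q) ∩ segment ℝ (parabola r) (parabola s)).Nonempty := by
  have hd : 0 < r + s - p - q := by linarith
  set x := (r * s - p * q) / (r + s - p - q)
  have hrx : r ≤ x := by
    rw [le_div_iff₀ hd]
    nlinarith [mul_nonneg (sub_nonneg.2 hpr.le) (sub_nonneg.2 hrq.le)]
  have hxq : x ≤ q := by
    rw [div_le_iff₀ hd]
    nlinarith [mul_nonneg (sub_nonneg.2 hrq.le) (sub_nonneg.2 hqs.le)]
  have hline : (p + q) * x - p * q = (r + s) * x - r * s := by
    simp only [x]; field_simp; ring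
  refine ⟨(x, (p + q) * x - p * q), mem_segment_parabola (by linarith) (by linarith) hxq, ?_⟩
  rw [hline]
  exact mem_segment_parabola (by linarith) hrx (by linarith)

lemma segment_subset_hull {S : Finset Pt} {a b : Pt} (ha : a ∈ S) (hb : b ∈ S) :
    segment ℝ a b ⊆ hull S :=
  (convex_convexHull ℝ _).segment_subset (subset_convexHull ℝ _ (mem_coe.2 ha))
    (subset_convexHull ℝ _ (mem_coe.2 hb))

lemma hull_parabola_triangles_inter_nonempty {a b c a' b' c' : ℝ} (hab' : a < b') (ha'b : a' < b)
    (hbc' : b < c') (hb'c : b' < c) :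
    (hull {parabola a, parabola b, parabola c} ∩
      hull {parabola a', parabola b', parabola c'}).Nonempty := by
  wlog haa' : a ≤ a' generalizing a b c a' b' c'
  · rw [Set.inter_comm]
    exact this ha'b hab' hb'c hbc' (le_of_not_ge haa')
  rcases haa'.eq_or_lt with rfl | haa'
  · exact ⟨parabola a, subset_convexHull ℝ _ (by simp), subset_convexHull ℝ _ (by simp)⟩
  · obtain ⟨z, hz, hz'⟩ := segment_parabola_inter_nonempty haa' ha'b hbc'
    exact ⟨z, segment_subset_hull (by simp) (by simp) hz,
      segment_subset_hull (by simp) (by simp) hz'⟩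

lemma hull_inter_nonempty_of_mem_transversalTriples {X Y Z : Finset ℝ}
    (hXY : ∀ x ∈ X, ∀ y ∈ Y, x < y) (hYZ : ∀ y ∈ Y, ∀ z ∈ Z, y < z) {S T : Finset Pt}
    (hS : S ∈ transversalTriples (X.image parabola) (Y.image parabola) (Z.image parabola))
    (hT : T ∈ transversalTriples (X.image parabola) (Y.image parabola) (Z.image parabola)) :
    (hull S ∩ hull T).Nonempty := by
  simp only [mem_transversalTriples, mem_image] at hS hT
  obtain ⟨_, ⟨a, ha, rfl⟩, _, ⟨b, hb, rfl⟩, _, ⟨c, hc, rfl⟩, rfl⟩ := hS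
  obtain ⟨_, ⟨a', ha', rfl⟩, _, ⟨b', hb', rfl⟩, _, ⟨c', hc', rfl⟩, rfl⟩ := hT
  exact hull_parabola_triangles_inter_nonempty (hXY a ha b' hb') (hXY a' ha' b hb)
    (hYZ b hb c' hc') (hYZ b' hb' c hc)

noncomputable def arc (m k : ℕ) : Finset ℝ := (Ico (k * m) ((k + 1) * m)).image (↑)

lemma card_arc (m k : ℕ) : #(arc m k) = m := by
  rw [arc, card_image_of_injective _ Nat.cast_injective, Nat.card_Ico, add_one_mul,
    Nat.add_sub_cancel_left]

lemma lt_of_mem_arc {m k l : ℕ} (hkl : k < l) {x y : ℝ} (hx : x ∈ arc m k) (hy : y ∈ arc m l) :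
    x < y := by
  simp only [arc, mem_image, mem_Ico] at hx hy
  obtain ⟨i, ⟨-, hi⟩, rfl⟩ := hx
  obtain ⟨j, ⟨hj, -⟩, rfl⟩ := hy
  exact_mod_cast hi.trans_le ((Nat.mul_le_mul_right m hkl).trans hj)

lemma disjoint_image_parabola_arc {m k l : ℕ} (hkl : k < l) :
    Disjoint ((arc m k).image parabola) ((arc m l).image parabola) :=
  (disjoint_image parabola_injective).2 <|
    disjoint_left.2 fun _ hx hy => (lt_of_mem_arc hkl hx hy).false

theorem exists_pairwise_intersecting_family_cubed_general (m : ℕ) :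
    ∃ (P : Finset Pt) (𝒮 : Finset (Finset Pt)),
      GenPos P ∧ ConvexPos P ∧ P.card = 3 * m ∧
      (∀ S ∈ 𝒮, S ⊆ P) ∧
      (∀ S ∈ 𝒮, ∀ T ∈ 𝒮, hull S = hull T → S = T) ∧
      (∀ S ∈ 𝒮, ∀ T ∈ 𝒮, S ≠ T → ¬ hull S ⊆ hull T) ∧
      (∀ S ∈ 𝒮, ∀ T ∈ 𝒮, S ≠ T → (hull S ∩ hull T).Nonempty) ∧
      𝒮.card = m ^ 3 := by
  set A : ℕ → Finset Pt := fun k => (arc m k).image parabola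
  set 𝒮 := transversalTriples (A 0) (A 1) (A 2)
  have h01 : Disjoint (A 0) (A 1) := disjoint_image_parabola_arc zero_lt_one
  have h02 : Disjoint (A 0) (A 2) := disjoint_image_parabola_arc zero_lt_two
  have h12 : Disjoint (A 1) (A 2) := disjoint_image_parabola_arc one_lt_two
  have hcardA (k : ℕ) : #(A k) = m := by
    rw [card_image_of_injective _ parabola_injective, card_arc]
  have hP : (arc m 0 ∪ arc m 1 ∪ arc m 2).image parabola = A 0 ∪ A 1 ∪ A 2 := by
    simp only [A, image_union]
  have hconv : ConvexPos (A 0 ∪ A 1 ∪ A 2) := hP ▸ convexPos_image_parabola _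
  have heq {S T : Finset Pt} (hS : S ∈ 𝒮) (hT : T ∈ 𝒮) (h : hull S ⊆ hull T) : S = T :=
    hconv.eq_of_hull_subset (subset_union_of_mem_transversalTriples hS)
      (subset_union_of_mem_transversalTriples hT)
      (by rw [card_of_mem_transversalTriples h01 h02 h12 hS,
        card_of_mem_transversalTriples h01 h02 h12 hT]) h
  refine ⟨A 0 ∪ A 1 ∪ A 2, 𝒮, hP ▸ genPos_image_parabola _, hconv, ?_,
    fun S hS => subset_union_of_mem_transversalTriples hS, fun S hS T hT h => heq hS hT h.le,
    fun S hS T hT hne h => hne (heq hS hT h), fun S hS T hT _ => ?_, ?_⟩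
  · rw [card_union_of_disjoint (disjoint_union_left.2 ⟨h02, h12⟩), card_union_of_disjoint h01,
      hcardA, hcardA, hcardA]
    ring
  · exact hull_inter_nonempty_of_mem_transversalTriples
      (fun _ hx _ hy => lt_of_mem_arc zero_lt_one hx hy)
      (fun _ hy _ hz => lt_of_mem_arc one_lt_two hy hz) hS hT
  · rw [card_transversalTriples h01 h02 h12, hcardA, hcardA, hcardA]
    ring

/-- Without the triple-intersection condition, families of pairwise intersecting,
containment-free convex hulls on `n = 3m` points can have size `(n/3)^3 = m^3`. -/
theorem exists_pairwise_intersecting_family_cubed (m : ℕ) (hm : 0 < m) :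
    ∃ (P : Finset Pt) (𝒮 : Finset (Finset Pt)),
      GenPos P ∧ ConvexPos P ∧ P.card = 3 * m ∧
      (∀ S ∈ 𝒮, S ⊆ P) ∧
      (∀ S ∈ 𝒮, ∀ T ∈ 𝒮, hull S = hull T → S = T) ∧
      (∀ S ∈ 𝒮, ∀ T ∈ 𝒮, S ≠ T → ¬ hull S ⊆ hull T) ∧
      (∀ S ∈ 𝒮, ∀ T ∈ 𝒮, S ≠ T → (hull S ∩ hull T).Nonempty) ∧
      𝒮.card = m ^ 3 :=
  exists_pairwise_intersecting_family_cubed_general m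
end

section
/- Allowing containments between hulls, there exists for every n a point set of n points in convex position and a family of ⌊3(n−1)/2⌋ distinct convex hulls of subsets such that any two hulls intersect and any three distinct hulls intersect only in points of P. -/
open Finset

namespace Goss

/-- Points on the parabola `y = x²`. -/
noncomputable def pt (m : ℕ) : Pt := ((m : ℝ), (m : ℝ) * m)

lemma pt_inj : Function.Injective pt := by
  intro a b h
  have : ((a:ℝ)) = b := congrArg Prod.fst h
  exact_mod_cast this

/-- The point set: `n` points on the parabola. -/
noncomputable def Pset (n : ℕ) : Finset Pt := (range n).image pt

/-- Segment from the apex `pt 0` to `pt k`. -/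
noncomputable def seg (k : ℕ) : Finset Pt := {pt 0, pt k}

/-- Triangle at the apex `pt 0` through `pt (2i-1)` and `pt (2i)`. -/
noncomputable def tri (i : ℕ) : Finset Pt := {pt 0, pt (2*i-1), pt (2*i)}

/-- Gossett's family: all segments at the apex plus every second triangle. -/
noncomputable def fam (n : ℕ) : Finset (Finset Pt) :=
  ((Icc 1 (n-1)).image seg) ∪ ((Icc 1 ((n-1)/2)).image tri)

/-- Angular sector at the origin between slopes `a` and `b`. -/
def slab (a b : ℝ) : Set Pt := {x | 0 ≤ x.1 ∧ a * x.1 ≤ x.2 ∧ x.2 ≤ b * x.1}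

lemma convex_slab (a b : ℝ) : Convex ℝ (slab a b) := by
  intro x hx y hy t s ht hs hts
  obtain ⟨h1, h2, h3⟩ := hx
  obtain ⟨h4, h5, h6⟩ := hy
  refine ⟨?_, ?_, ?_⟩ <;>
    simp only [Prod.fst_add, Prod.snd_add, Prod.smul_fst, Prod.smul_snd, smul_eq_mul]
  · nlinarith [mul_le_mul_of_nonneg_left h1 ht, mul_le_mul_of_nonneg_left h4 hs]
  · nlinarith [mul_le_mul_of_nonneg_left h2 ht, mul_le_mul_of_nonneg_left h5 hs]
  · nlinarith [mul_le_mul_of_nonneg_left h3 ht, mul_le_mul_of_nonneg_left h6 hs]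

lemma pt0_mem_slab (a b : ℝ) : pt 0 ∈ slab a b := by
  simp [slab, pt]

lemma pt_mem_slab {a b : ℝ} {m : ℕ} (ha : a ≤ m) (hb : (m:ℝ) ≤ b) : pt m ∈ slab a b := by
  refine ⟨by simp [pt], ?_, ?_⟩ <;> simp only [pt]
  · nlinarith [Nat.cast_nonneg (α := ℝ) m]
  · nlinarith [Nat.cast_nonneg (α := ℝ) m]

lemma mem_slab_pt {a b : ℝ} {m : ℕ} (hm : 1 ≤ m) (h : pt m ∈ slab a b) :
    a ≤ (m:ℝ) ∧ (m:ℝ) ≤ b := by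
  obtain ⟨_, h2, h3⟩ := h
  simp only [pt] at h2 h3
  have hm' : (1:ℝ) ≤ m := by exact_mod_cast hm
  constructor <;> nlinarith

lemma hull_seg_subset {k : ℕ} : hull (seg k) ⊆ slab k k := by
  apply convexHull_min _ (convex_slab _ _)
  intro x hx
  simp only [seg, coe_insert, coe_singleton, Set.mem_insert_iff, Set.mem_singleton_iff] at hx
  rcases hx with rfl | rfl
  · exact pt0_mem_slab _ _
  · exact pt_mem_slab le_rfl le_rfl

lemma hull_tri_subset {i : ℕ} :
    hull (tri i) ⊆ slab ((2*i-1 : ℕ):ℝ) ((2*i : ℕ):ℝ) := by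
  apply convexHull_min _ (convex_slab _ _)
  intro x hx
  simp only [tri, coe_insert, coe_singleton, Set.mem_insert_iff, Set.mem_singleton_iff] at hx
  rcases hx with rfl | rfl | rfl
  · exact pt0_mem_slab _ _
  · exact pt_mem_slab le_rfl (by exact_mod_cast Nat.sub_le _ _)
  · exact pt_mem_slab (by exact_mod_cast Nat.sub_le _ _) le_rfl

lemma slab_inter {a b c d : ℝ} (h : b < c) {x : Pt}
    (h1 : x ∈ slab a b) (h2 : x ∈ slab c d) : x = pt 0 := by
  obtain ⟨p1, p2, p3⟩ := h1
  obtain ⟨q1, q2, q3⟩ := h2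
  have hx1 : x.1 = 0 := by nlinarith
  rw [hx1] at p2 p3
  simp only [mul_zero] at p2 p3
  have hx2 : x.2 = 0 := le_antisymm p3 p2
  have : pt 0 = ((0:ℝ), (0:ℝ)) := by simp [pt]
  rw [this]
  exact Prod.ext hx1 hx2

lemma pt_mem_hull_seg {m j : ℕ} (hm : 1 ≤ m) (h : pt m ∈ hull (seg j)) : m = j := by
  have := mem_slab_pt hm (hull_seg_subset h)
  have h1 := Nat.cast_le.mp this.1
  have h2 := Nat.cast_le.mp this.2
  omega

lemma pt_mem_hull_tri {m i : ℕ} (hm : 1 ≤ m) (h : pt m ∈ hull (tri i)) :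
    m = 2*i-1 ∨ m = 2*i := by
  have := mem_slab_pt hm (hull_tri_subset h)
  have h1 := Nat.cast_le.mp this.1
  have h2 := Nat.cast_le.mp this.2
  omega

lemma mem_hull_of_mem {S : Finset Pt} {x : Pt} (h : x ∈ S) : x ∈ hull S :=
  subset_convexHull ℝ _ h

lemma segseg {j k : ℕ} (hne : j ≠ k) {x : Pt}
    (hx1 : x ∈ hull (seg j)) (hx2 : x ∈ hull (seg k)) : x = pt 0 := by
  rcases Nat.lt_or_ge j k with h | h
  · exact slab_inter (by exact_mod_cast h) (hull_seg_subset hx1) (hull_seg_subset hx2)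
  · have h' : k < j := lt_of_le_of_ne h (Ne.symm hne)
    exact slab_inter (by exact_mod_cast h') (hull_seg_subset hx2) (hull_seg_subset hx1)

lemma tritri {i j : ℕ} (hi : 1 ≤ i) (hj : 1 ≤ j) (hne : i ≠ j) {x : Pt}
    (hx1 : x ∈ hull (tri i)) (hx2 : x ∈ hull (tri j)) : x = pt 0 := by
  rcases Nat.lt_or_ge i j with h | h
  · have hlt : (2*i : ℕ) < 2*j - 1 := by omega
    exact slab_inter (by exact_mod_cast hlt) (hull_tri_subset hx1) (hull_tri_subset hx2)
  · have h' : j < i := lt_of_le_of_ne h (Ne.symm hne)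
    have hlt : (2*j : ℕ) < 2*i - 1 := by omega
    exact slab_inter (by exact_mod_cast hlt) (hull_tri_subset hx2) (hull_tri_subset hx1)

lemma collinear_cross {a b c : Pt} (h : Collinear ℝ ({a, b, c} : Set Pt)) :
    cross2 (b - a) (c - a) = 0 := by
  rw [collinear_iff_of_mem (Set.mem_insert a _)] at h
  obtain ⟨v, hv⟩ := h
  obtain ⟨rb, hb⟩ := hv b (by simp)
  obtain ⟨rc, hc⟩ := hv c (by simp)
  subst hb; subst hc
  simp only [vadd_eq_add, cross2, Prod.fst_add, Prod.snd_add, Prod.smul_fst, Prod.smul_snd,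
    smul_eq_mul, Prod.fst_sub, Prod.snd_sub]
  ring

lemma genpos (n : ℕ) : GenPos (Pset n) := by
  intro a ha b hb c hc hab hac hbc hcol
  simp only [Pset, mem_image, mem_range] at ha hb hc
  obtain ⟨i, -, rfl⟩ := ha
  obtain ⟨j, -, rfl⟩ := hb
  obtain ⟨k, -, rfl⟩ := hc
  have hij : (i:ℝ) ≠ j := fun h => hab (congrArg pt (by exact_mod_cast h))
  have hik : (i:ℝ) ≠ k := fun h => hac (congrArg pt (by exact_mod_cast h))
  have hjk : (j:ℝ) ≠ k := fun h => hbc (congrArg pt (by exact_mod_cast h))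
  have h0 := collinear_cross hcol
  simp only [cross2, pt, Prod.fst_sub, Prod.snd_sub] at h0
  have h1 : ((j:ℝ) - i) * ((k:ℝ) - i) * ((k:ℝ) - j) = 0 := by linear_combination h0
  rcases mul_eq_zero.mp h1 with h2 | h2
  · rcases mul_eq_zero.mp h2 with h3 | h3
    · exact hij (show (i:ℝ) = j by linarith [sub_eq_zero.mp h3])
    · exact hik (show (i:ℝ) = k by linarith [sub_eq_zero.mp h3])
  · exact hjk (show (j:ℝ) = k by linarith [sub_eq_zero.mp h2])

lemma convexpos (n : ℕ) : ConvexPos (Pset n) := by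
  intro x hx hmem
  simp only [Pset, mem_image, mem_range] at hx
  obtain ⟨m, hm, rfl⟩ := hx
  set C : Set Pt := {z : Pt | 1 ≤ z.2 - 2*(m:ℝ)*z.1 + (m:ℝ)*m} with hC
  have hconv : Convex ℝ C := by
    intro z hz w hw t s ht hs hts
    simp only [hC, Set.mem_setOf_eq, Prod.fst_add, Prod.snd_add, Prod.smul_fst,
      Prod.smul_snd, smul_eq_mul] at *
    nlinarith [mul_le_mul_of_nonneg_left hz ht, mul_le_mul_of_nonneg_left hw hs]
  have hsub : (↑((Pset n).erase (pt m)) : Set Pt) ⊆ C := by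
    intro z hz
    simp only [coe_erase, Set.mem_diff, Set.mem_singleton_iff, mem_coe, Pset,
      mem_image, mem_range] at hz
    obtain ⟨⟨k, hk, rfl⟩, hne⟩ := hz
    have hkm : k ≠ m := fun h => hne (congrArg pt h)
    simp only [hC, Set.mem_setOf_eq, pt]
    have : ((k:ℝ) - m)^2 ≥ 1 := by
      rcases Nat.lt_or_ge k m with h | h
      · have : (k:ℝ) + 1 ≤ m := by exact_mod_cast h
        nlinarith
      · have h' : m + 1 ≤ k := by omega
        have : (m:ℝ) + 1 ≤ k := by exact_mod_cast h'
        nlinarith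
    nlinarith
  have := convexHull_min hsub hconv hmem
  simp only [hC, Set.mem_setOf_eq, pt] at this
  nlinarith

lemma card_Pset (n : ℕ) : (Pset n).card = n := by
  rw [Pset, card_image_of_injective _ pt_inj, card_range]

lemma mem_fam {n : ℕ} {S : Finset Pt} (h : S ∈ fam n) :
    (∃ k, 1 ≤ k ∧ k ≤ n-1 ∧ S = seg k) ∨ (∃ i, 1 ≤ i ∧ i ≤ (n-1)/2 ∧ S = tri i) := by
  simp only [fam, mem_union, mem_image, mem_Icc] at h
  rcases h with ⟨k, ⟨h1, h2⟩, h3⟩ | ⟨i, ⟨h1, h2⟩, h3⟩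
  · exact Or.inl ⟨k, h1, h2, h3.symm⟩
  · exact Or.inr ⟨i, h1, h2, h3.symm⟩

lemma seg_inj {j k : ℕ} (hj : 1 ≤ j) (h : seg j = seg k) : j = k := by
  have hm : pt j ∈ seg k := by rw [← h]; simp [seg]
  simp only [seg, mem_insert, mem_singleton] at hm
  rcases hm with hm | hm
  · exact absurd (pt_inj hm) (by omega)
  · exact pt_inj hm

lemma tri_inj {i j : ℕ} (hi : 1 ≤ i) (hj : 1 ≤ j) (h : tri i = tri j) : i = j := by
  have hm : pt (2*i) ∈ tri j := by rw [← h]; simp [tri]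
  simp only [tri, mem_insert, mem_singleton] at hm
  rcases hm with hm | hm | hm <;> (have := pt_inj hm; omega)

lemma card_seg {k : ℕ} (hk : 1 ≤ k) : (seg k).card = 2 := by
  have h1 : pt 0 ∉ ({pt k} : Finset Pt) := by
    simp only [mem_singleton]
    exact fun h => absurd (pt_inj h) (by omega)
  rw [seg, card_insert_of_notMem h1, card_singleton]

lemma card_tri {i : ℕ} (hi : 1 ≤ i) : (tri i).card = 3 := by
  have h1 : pt (2*i-1) ∉ ({pt (2*i)} : Finset Pt) := by
    simp only [mem_singleton]
    exact fun h => absurd (pt_inj h) (by omega)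
  have h2 : pt 0 ∉ ({pt (2*i-1), pt (2*i)} : Finset Pt) := by
    simp only [mem_insert, mem_singleton]
    rintro (h | h) <;> exact absurd (pt_inj h) (by omega)
  rw [tri, card_insert_of_notMem h2, card_insert_of_notMem h1, card_singleton]

lemma pt_mem_Pset {n m : ℕ} (h : m < n) : pt m ∈ Pset n := by
  simp only [Pset, mem_image, mem_range]
  exact ⟨m, h, rfl⟩

lemma card_fam (n : ℕ) : (fam n).card = 3 * (n-1) / 2 := by
  rw [fam, card_union_of_disjoint, card_image_of_injOn, card_image_of_injOn,
    Nat.card_Icc, Nat.card_Icc]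
  · omega
  · intro i hi j hj h
    simp only [coe_Icc, Set.mem_Icc] at hi hj
    exact tri_inj hi.1 hj.1 h
  · intro i hi j hj h
    simp only [coe_Icc, Set.mem_Icc] at hi hj
    exact seg_inj hi.1 h
  · rw [disjoint_left]
    intro S hS hT
    simp only [mem_image, mem_Icc] at hS hT
    obtain ⟨k, ⟨hk1, -⟩, rfl⟩ := hS
    obtain ⟨i, ⟨hi1, -⟩, hi3⟩ := hT
    have := card_seg hk1
    rw [← hi3, card_tri hi1] at this
    omega

lemma fam_subset {n : ℕ} {S : Finset Pt} (h : S ∈ fam n) : S ⊆ Pset n := by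
  rcases mem_fam h with ⟨k, h1, h2, rfl⟩ | ⟨i, h1, h2, rfl⟩ <;> intro x hx
  · simp only [seg, mem_insert, mem_singleton] at hx
    rcases hx with rfl | rfl
    · exact pt_mem_Pset (by omega)
    · exact pt_mem_Pset (by omega)
  · simp only [tri, mem_insert, mem_singleton] at hx
    rcases hx with rfl | rfl | rfl
    · exact pt_mem_Pset (by omega)
    · exact pt_mem_Pset (by omega)
    · exact pt_mem_Pset (by omega)

lemma fam_pos {n : ℕ} {S : Finset Pt} (h : S ∈ fam n) : 0 < n := by
  rcases mem_fam h with ⟨k, h1, h2, -⟩ | ⟨i, h1, h2, -⟩ <;> omega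

lemma pt0_mem_fam {n : ℕ} {S : Finset Pt} (h : S ∈ fam n) : pt 0 ∈ S := by
  rcases mem_fam h with ⟨k, -, -, rfl⟩ | ⟨i, -, -, rfl⟩
  · simp [seg]
  · simp [tri]

lemma hull_inj {n : ℕ} {S T : Finset Pt} (hS : S ∈ fam n) (hT : T ∈ fam n)
    (h : hull S = hull T) : S = T := by
  rcases mem_fam hS with ⟨j, hj1, -, rfl⟩ | ⟨a, ha1, -, rfl⟩ <;>
    rcases mem_fam hT with ⟨k, hk1, -, rfl⟩ | ⟨b, hb1, -, rfl⟩
  · have hm : pt j ∈ hull (seg k) := h ▸ mem_hull_of_mem (by simp [seg])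
    rw [pt_mem_hull_seg hj1 hm]
  · have hm1 : pt (2*b-1) ∈ hull (seg j) := h ▸ mem_hull_of_mem (by simp [tri])
    have hm2 : pt (2*b) ∈ hull (seg j) := h ▸ mem_hull_of_mem (by simp [tri])
    have e1 := pt_mem_hull_seg (by omega) hm1
    have e2 := pt_mem_hull_seg (by omega) hm2
    omega
  · have hm1 : pt (2*a-1) ∈ hull (seg k) := h ▸ mem_hull_of_mem (by simp [tri])
    have hm2 : pt (2*a) ∈ hull (seg k) := h ▸ mem_hull_of_mem (by simp [tri])
    have e1 := pt_mem_hull_seg (by omega) hm1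
    have e2 := pt_mem_hull_seg (by omega) hm2
    omega
  · have hm : pt (2*a) ∈ hull (tri b) := h ▸ mem_hull_of_mem (by simp [tri])
    have e := pt_mem_hull_tri (by omega) hm
    have : a = b := by omega
    rw [this]

lemma fam_triple {n : ℕ} {S T U : Finset Pt} (hS : S ∈ fam n) (hT : T ∈ fam n)
    (hU : U ∈ fam n) (hST : S ≠ T) (hSU : S ≠ U) (hTU : T ≠ U) :
    hull S ∩ hull T ∩ hull U ⊆ (↑(Pset n) : Set Pt) := by
  intro x hx
  obtain ⟨⟨h1, h2⟩, h3⟩ := hx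
  have hn := fam_pos hS
  suffices hx0 : x = pt 0 by
    rw [hx0]
    exact mem_coe.mpr (pt_mem_Pset hn)
  rcases mem_fam hS with ⟨j, hj1, -, rfl⟩ | ⟨a, ha1, -, rfl⟩ <;>
    rcases mem_fam hT with ⟨k, hk1, -, rfl⟩ | ⟨b, hb1, -, rfl⟩ <;>
    rcases mem_fam hU with ⟨l, hl1, -, rfl⟩ | ⟨c, hc1, -, rfl⟩
  · exact segseg (fun h => hST (by rw [h])) h1 h2
  · exact segseg (fun h => hST (by rw [h])) h1 h2
  · exact segseg (fun h => hSU (by rw [h])) h1 h3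
  · exact tritri hb1 hc1 (fun h => hTU (by rw [h])) h2 h3
  · exact segseg (fun h => hTU (by rw [h])) h2 h3
  · exact tritri ha1 hc1 (fun h => hSU (by rw [h])) h1 h3
  · exact tritri ha1 hb1 (fun h => hST (by rw [h])) h1 h2
  · exact tritri ha1 hb1 (fun h => hST (by rw [h])) h1 h2

end Goss

/-- Allowing containments between hulls, for every `n` there is a point set of `n`
points in convex position and a family of `⌊3(n-1)/2⌋` distinct convex hulls of
subsets such that any two hulls intersect and any three distinct hulls intersect only
in points of `P`. -/
theorem exists_family_with_containments (n : ℕ) :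
    ∃ (P : Finset Pt) (𝒮 : Finset (Finset Pt)),
      GenPos P ∧ ConvexPos P ∧ P.card = n ∧
      (∀ S ∈ 𝒮, S ⊆ P) ∧
      (∀ S ∈ 𝒮, ∀ T ∈ 𝒮, hull S = hull T → S = T) ∧
      (∀ S ∈ 𝒮, ∀ T ∈ 𝒮, S ≠ T → (hull S ∩ hull T).Nonempty) ∧
      (∀ S ∈ 𝒮, ∀ T ∈ 𝒮, ∀ U ∈ 𝒮, S ≠ T → S ≠ U → T ≠ U →
        hull S ∩ hull T ∩ hull U ⊆ (↑P : Set Pt)) ∧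
      𝒮.card = 3 * (n - 1) / 2 := by
  refine ⟨Goss.Pset n, Goss.fam n, Goss.genpos n, Goss.convexpos n, Goss.card_Pset n,
    fun S hS => Goss.fam_subset hS,
    fun S hS T hT h => Goss.hull_inj hS hT h,
    fun S hS T hT _ => ⟨Goss.pt 0, Goss.mem_hull_of_mem (Goss.pt0_mem_fam hS),
      Goss.mem_hull_of_mem (Goss.pt0_mem_fam hT)⟩,
    fun S hS T hT U hU hST hSU hTU => Goss.fam_triple hS hT hU hST hSU hTU,
    Goss.card_fam n⟩
end

section
/- In the boundary diagram of a convex hull thrackle, a segment e that is itself a convex hull of the thrackle (i.e., e = Conv(S) for some S ∈ S with |S| = 2) has weight exactly 3, while every other segment of the boundary diagram has weight at most 2. -/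
open Finset

/-- `xy` is a boundary edge of `Conv S`: both are points of `S` and all of `S` lies
(weakly) on one side of the line through `x` and `y`. -/
def IsBoundaryEdge (S : Finset Pt) (x y : Pt) : Prop :=
  x ∈ S ∧ y ∈ S ∧ x ≠ y ∧
    ((∀ c ∈ S, cross2 (y - x) (c - x) ≤ 0) ∨ (∀ c ∈ S, 0 ≤ cross2 (y - x) (c - x)))

open Classical in
/-- Weight of the segment `xy` in the boundary diagram: a hull with at least three
vertices contributes 1 for each of its boundary edges, a segment-hull contributes 3. -/
noncomputable def weight (𝒮 : Finset (Finset Pt)) (x y : Pt) : ℕ :=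
  ∑ S ∈ 𝒮, if IsBoundaryEdge S x y then (if S.card = 2 then 3 else 1) else 0

lemma seg_sub_hull {S : Finset Pt} {x y : Pt} (hx : x ∈ S) (hy : y ∈ S) :
    segment ℝ x y ⊆ hull S :=
  (convex_convexHull ℝ _).segment_subset (subset_convexHull ℝ _ (Finset.mem_coe.mpr hx))
    (subset_convexHull ℝ _ (Finset.mem_coe.mpr hy))

/-- In the boundary diagram of a convex hull thrackle, a segment that is itself a hull
of the thrackle has weight exactly 3, while every other segment has weight at most 2. -/
theorem boundary_diagram_weights (P : Finset Pt) (𝒮 : Finset (Finset Pt))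
    (hcht : CHT P 𝒮) (hsize : ∀ S ∈ 𝒮, 2 ≤ S.card)
    (x y : Pt) (hx : x ∈ P) (hy : y ∈ P) (hxy : x ≠ y) :
    (({x, y} : Finset Pt) ∈ 𝒮 → weight 𝒮 x y = 3) ∧
    (({x, y} : Finset Pt) ∉ 𝒮 → weight 𝒮 x y ≤ 2) := by
  classical
  obtain ⟨hgp, hsub, hdist, hnc, hint, htriple⟩ := hcht
  have hcardxy : ({x, y} : Finset Pt).card = 2 := Finset.card_pair hxy
  -- any S with xy as boundary edge and S ≠ {x,y} gives containment contradiction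
  have hkey : ∀ S ∈ 𝒮, IsBoundaryEdge S x y → S ≠ ({x, y} : Finset Pt) →
      ({x, y} : Finset Pt) ∉ 𝒮 ∨ False := by
    intro S hS hbd hne
    by_cases hmem : ({x, y} : Finset Pt) ∈ 𝒮
    · right
      refine hnc _ hmem _ hS (Ne.symm hne) ?_
      have : hull ({x, y} : Finset Pt) = segment ℝ x y := by
        rw [hull, show (↑({x, y} : Finset Pt) : Set Pt) = {x, y} by simp, convexHull_pair]
      rw [this]
      exact seg_sub_hull hbd.1 hbd.2.1
    · left; exact hmem
  constructor
  · intro hmem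
    have hbdxy : IsBoundaryEdge ({x, y} : Finset Pt) x y := by
      refine ⟨by simp, by simp, hxy, ?_⟩
      left
      intro c hc
      rcases Finset.mem_insert.mp hc with h | h
      · subst h; simp [cross2]
      · rw [Finset.mem_singleton] at h; subst h; simp [cross2]; ring_nf; rfl
    rw [weight]
    rw [Finset.sum_eq_single_of_mem ({x, y} : Finset Pt) hmem]
    · simp [hbdxy, hcardxy]
    · intro S hS hne
      by_cases hbd : IsBoundaryEdge S x y
      · rcases hkey S hS hbd hne with h | h
        · exact absurd hmem h
        · exact h.elim
      · simp [hbd]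
  · intro hnmem
    -- every contributing S has card ≠ 2, so each term ≤ 1
    have hterm : ∀ S ∈ 𝒮,
        (if IsBoundaryEdge S x y then (if S.card = 2 then 3 else 1) else 0)
        = (if IsBoundaryEdge S x y then 1 else 0) := by
      intro S hS
      by_cases hbd : IsBoundaryEdge S x y
      · have hc2 : S.card ≠ 2 := by
          intro h2
          have hsubS : ({x, y} : Finset Pt) ⊆ S := by
            intro z hz
            rcases Finset.mem_insert.mp hz with h | h
            · subst h; exact hbd.1
            · rw [Finset.mem_singleton] at h; subst h; exact hbd.2.1
          have : S = ({x, y} : Finset Pt) :=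
            (Finset.eq_of_subset_of_card_le hsubS (by omega)).symm
          exact hnmem (this ▸ hS)
        simp [hbd, hc2]
      · simp [hbd]
    rw [weight, Finset.sum_congr rfl hterm, ← Finset.card_filter]
    by_contra hgt
    push_neg at hgt
    obtain ⟨S, T, U, hS, hT, hU, hST, hSU, hTU⟩ :=
      Finset.two_lt_card_iff.mp hgt
    rw [Finset.mem_filter] at hS hT hU
    set m : Pt := midpoint ℝ x y with hm
    have hmseg : m ∈ segment ℝ x y := midpoint_mem_segment x y
    have hmP : m ∈ (↑P : Set Pt) := by
      apply htriple S hS.1 T hT.1 U hU.1 hST hSU hTU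
      exact ⟨⟨seg_sub_hull hS.2.1 hS.2.2.1 hmseg, seg_sub_hull hT.2.1 hT.2.2.1 hmseg⟩,
        seg_sub_hull hU.2.1 hU.2.2.1 hmseg⟩
    have hmx : x ≠ m := by
      intro h
      exact hxy ((midpoint_eq_left_iff (R := ℝ)).mp h.symm)
    have hmy : m ≠ y := by
      intro h
      exact hxy ((midpoint_eq_right_iff (R := ℝ)).mp h)
    have hcol : Collinear ℝ ({x, m, y} : Set Pt) := by
      have h1 : Collinear ℝ ({m, x, y} : Set Pt) :=
        collinear_insert_of_mem_affineSpan_pair (by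
          rw [hm, midpoint]
          exact AffineMap.lineMap_mem_affineSpan_pair _ _ _)
      have : ({x, m, y} : Set Pt) = ({m, x, y} : Set Pt) := Set.insert_comm x m {y}
      rw [this]; exact h1
    exact hgp x hx m hmP y hy hmx hxy hmy hcol
end
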